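/- Accelerated oblivious mirror descent bound (Theorem 3, deterministic form): Let X ⊆ ℝⁿ convex, F convex L-smooth, H(x) = μ‖x−x₁‖² with μ>0, Ψ = F+H, step-sizes with γ_{t+1} − γ_t ≤ α_t and α_t ≤ α_{t+1}. Define A_t = Σ_{s=1}^t α_s and the accelerated iterates: X_t^{md} = (A_{t−1}/A_t)X_t^{ag} + (α_t/A_t)X_t; X_{t+1} = argmin_{x∈X}{α_t(⟨g_t, x⟩ + H(x)) + γ_t D^H(x, X_t)} with g_t = ∇F(X_t^{md}) + Δ_t; X_{t+1}^{ag} = (A_{t−1}/A_t)X_t^{ag} + (α_t/A_t)X_{t+1}. Let T₀ = max{ t : 2L/μ ≥ γ_t A_t / α_t² }. Then for every x ∈ X and T ≥ 1: A_T (Ψ(X_{T+1}^{ag}) − Ψ(x)) + γ_T D^H(x, X_{T+1}) ≤ γ₁ D^H(x, x₁) + Σ_{t=1}^T α_t ⟨Δ_t, x − X_t⟩ + (L/2) Σ_{t=1}^{T₀} (α_t²/A_t)‖X_{t+1} − X_t‖² + Σ_{t=1}^T (2α_t²/(μγ_t))‖Δ_t‖². -/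

import Mathlib

/-!
The potential `A_{t-1} (Ψ(X_t^{ag}) - Ψ(x)) + γ_t D^H(x, X_t)` decreases along the iteration up
to the noise terms. In one step, `L`-smoothness at `X_{t+1}^{ag}` together with the gradient
inequality for `F` at `X_t^{md}` (linear coupling) bounds `A_t F(X_{t+1}^{ag})`, convexity of `H`
bounds `A_t H(X_{t+1}^{ag})`, and the prox step, whose objective is `2(α_t + γ_t)μ`-strongly convex,
contributes `(α_t + γ_t) D^H(x, X_{t+1})` and `-γ_t D^H(X_{t+1}, X_t)`. A quarter of the latter
absorbs the noise cross term by Young's inequality, another quarter absorbs the smoothness error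
`(L/2)(α_t²/A_t)‖X_{t+1} - X_t‖²` once `t > T₀`. Since `γ_{t+1} ≤ γ_t + α_t`, the one-step
inequalities telescope.
-/

open RealInnerProductSpace Set Filter Topology

section InnerProductSpace

variable {E : Type*} [NormedAddCommGroup E] [InnerProductSpace ℝ E]

section StrongConvexity

variable {s : Set E} {f g : E → ℝ} {m n : ℝ}

theorem StrongConvexOn.add (hf : StrongConvexOn s m f) (hg : StrongConvexOn s n g) :
    StrongConvexOn s (m + n) (f + g) :=
  (UniformConvexOn.add hf hg).mono fun r => le_of_eq (by simp only [Pi.add_apply]; ring)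

theorem StrongConvexOn.const_mul (hf : StrongConvexOn s m f) {c : ℝ} (hc : 0 ≤ c) :
    StrongConvexOn s (c * m) fun x => c * f x := by
  refine ⟨hf.1, fun x hx y hy a b ha hb hab => ?_⟩
  have h := mul_le_mul_of_nonneg_left (hf.2 hx hy ha hb hab) hc
  simp only [smul_eq_mul] at h ⊢
  linarith

theorem strongConvexOn_norm_sub_sq (hs : Convex ℝ s) (u : E) :
    StrongConvexOn s 2 fun x => ‖x - u‖ ^ 2 := by
  refine ⟨hs, fun x _ y _ a b _ _ hab => le_of_eq ?_⟩
  obtain rfl : b = 1 - a := by linarith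
  have hcomb : a • x + (1 - a) • y - u = a • (x - u) + (1 - a) • (y - u) := by module
  have hdiff : x - y = (x - u) - (y - u) := by abel
  beta_reduce
  rw [hcomb, hdiff, norm_add_sq_real, norm_sub_sq_real (x - u) (y - u), norm_smul, norm_smul,
    real_inner_smul_left, real_inner_smul_right, mul_pow, mul_pow, Real.norm_eq_abs,
    Real.norm_eq_abs, sq_abs, sq_abs, smul_eq_mul, smul_eq_mul]
  ring

theorem StrongConvexOn.add_sq_le_of_isMinOn (hf : StrongConvexOn s m f) {p x : E}
    (hmin : IsMinOn f s p) (hp : p ∈ s) (hx : x ∈ s) :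
    f p + m / 2 * ‖x - p‖ ^ 2 ≤ f x := by
  have hsegment : ∀ τ ∈ Ioc (0 : ℝ) 1, f p + (1 - τ) * (m / 2 * ‖x - p‖ ^ 2) ≤ f x := by
    rintro τ ⟨hτ0, hτ1⟩
    have hconv := hf.2 hp hx (sub_nonneg.2 hτ1) hτ0.le (sub_add_cancel 1 τ)
    have hle : f p ≤ f ((1 - τ) • p + τ • x) :=
      hmin (hf.1 hp hx (sub_nonneg.2 hτ1) hτ0.le (sub_add_cancel 1 τ))
    rw [smul_eq_mul, smul_eq_mul, norm_sub_rev p x] at hconv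
    have : τ * (f p + (1 - τ) * (m / 2 * ‖x - p‖ ^ 2)) ≤ τ * f x := by linarith
    exact le_of_mul_le_mul_left this hτ0
  have hlim : Tendsto (fun τ : ℝ => f p + (1 - τ) * (m / 2 * ‖x - p‖ ^ 2)) (𝓝[>] 0)
      (𝓝 (f p + m / 2 * ‖x - p‖ ^ 2)) :=
    tendsto_nhdsWithin_of_tendsto_nhds <| (by fun_prop : Continuous _).tendsto' _ _ (by simp)
  exact le_of_tendsto hlim (eventually_of_mem (Ioc_mem_nhdsGT zero_lt_one) hsegment)

end StrongConvexity

theorem ConvexOn.add_inner_sub_le_of_hasGradientAt [CompleteSpace E] {f : E → ℝ}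
    (hf : ConvexOn ℝ univ f) {x g : E} (hg : HasGradientAt f g x) (y : E) :
    f x + ⟪g, y - x⟫ ≤ f y := by
  let ℓ : ℝ →ᵃ[ℝ] E := AffineMap.lineMap x y
  have hline : HasDerivAt (f ∘ ℓ) ⟪g, y - x⟫ 0 := by
    have hf' : HasFDerivAt f (InnerProductSpace.toDual ℝ E g) (ℓ 0) := by
      simpa [ℓ] using hg.hasFDerivAt
    simpa using hf'.comp_hasDerivAt (0 : ℝ) AffineMap.hasDerivAt_lineMap
  have := (hf.comp_affineMap ℓ).le_slope_of_hasDerivAt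
    (mem_univ 0) (mem_univ 1) zero_lt_one hline
  simp [slope_def_field, ℓ] at this
  linarith

theorem ConvexOn.mul_map_div_smul_add_le {f : E → ℝ} (hf : ConvexOn ℝ univ f) {a b c : ℝ}
    (ha : 0 ≤ a) (hb : 0 ≤ b) (hc : a + b = c) (hc₀ : 0 < c) (y z : E) :
    c * f ((a / c) • y + (b / c) • z) ≤ a * f y + b * f z := by
  subst hc
  have h := hf.2 (mem_univ y) (mem_univ z) (by positivity) (by positivity)
    (by field_simp : a / (a + b) + b / (a + b) = 1)
  calc (a + b) * f ((a / (a + b)) • y + (b / (a + b)) • z)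
      ≤ (a + b) * ((a / (a + b)) • f y + (b / (a + b)) • f z) :=
        mul_le_mul_of_nonneg_left h hc₀.le
    _ = a * f y + b * f z := by simp only [smul_eq_mul]; field_simp

theorem ConvexOn.linear_coupling_le [CompleteSpace E] {f : E → ℝ} {f' : E → E}
    (hf : ConvexOn ℝ univ f) (hf' : ∀ x, HasGradientAt f (f' x) x) {L : ℝ}
    (hsmooth : ∀ x y, f x - f y - ⟪f' y, x - y⟫ ≤ L / 2 * ‖x - y‖ ^ 2)
    {a b c : ℝ} (ha : 0 ≤ a) (hb : 0 < b) (hc : c = a + b) {y z z' m y' : E}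
    (hm : m = (a / c) • y + (b / c) • z) (hy' : y' = (a / c) • y + (b / c) • z') (x : E) :
    c * f y' ≤ a * f y + b * f x + b * ⟪f' m, z' - x⟫ + L / 2 * (b ^ 2 / c) * ‖z' - z‖ ^ 2 := by
  subst hc
  have hab : 0 < a + b := by linarith
  have hstep : y' - m = (b / (a + b)) • (z' - z) := by rw [hm, hy']; module
  have hcenter : (a + b) * ⟪f' m, m⟫ = a * ⟪f' m, y⟫ + b * ⟪f' m, z⟫ := by
    have : (a + b) • m = a • y + b • z := by
      rw [hm, smul_add, smul_smul, smul_smul, mul_div_cancel₀ _ hab.ne', mul_div_cancel₀ _ hab.ne']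
    rw [← real_inner_smul_right, this, inner_add_right, real_inner_smul_right,
      real_inner_smul_right]
  have hdescent : (a + b) * f y' ≤
      (a + b) * f m + b * ⟪f' m, z' - z⟫ + L / 2 * (b ^ 2 / (a + b)) * ‖z' - z‖ ^ 2 := by
    have h := mul_le_mul_of_nonneg_left (hsmooth y' m) hab.le
    rw [hstep, real_inner_smul_right, norm_smul, mul_pow, Real.norm_eq_abs, sq_abs] at h
    have e1 : (a + b) * (b / (a + b) * ⟪f' m, z' - z⟫) = b * ⟪f' m, z' - z⟫ := by field_simp
    have e2 : (a + b) * (L / 2 * ((b / (a + b)) ^ 2 * ‖z' - z‖ ^ 2))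
        = L / 2 * (b ^ 2 / (a + b)) * ‖z' - z‖ ^ 2 := by field_simp
    linarith
  have hy := mul_le_mul_of_nonneg_left (hf.add_inner_sub_le_of_hasGradientAt (hf' m) y) ha
  have hx := mul_le_mul_of_nonneg_left (hf.add_inner_sub_le_of_hasGradientAt (hf' m) x) hb.le
  simp only [inner_sub_right] at hdescent hy hx ⊢
  linarith

theorem mul_inner_le_sq_div_add (b : ℝ) {c : ℝ} (hc : 0 < c) (u w : E) :
    b * ⟪u, w⟫ ≤ b ^ 2 / c * ‖u‖ ^ 2 + c / 4 * ‖w‖ ^ 2 := by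
  have hcs : b * ⟪u, w⟫ ≤ |b| * ‖u‖ * ‖w‖ := by
    rw [← real_inner_smul_left, ← Real.norm_eq_abs, ← norm_smul]
    exact real_inner_le_norm _ _
  have hyoung : |b| * ‖u‖ * ‖w‖ ≤ b ^ 2 / c * ‖u‖ ^ 2 + c / 4 * ‖w‖ ^ 2 := by
    rw [div_mul_eq_mul_div, div_add' _ _ _ hc.ne', le_div_iff₀ hc]
    nlinarith [sq_nonneg (|b| * ‖u‖ - c / 2 * ‖w‖), sq_abs b]
  linarith

section AcceleratedStep

variable [CompleteSpace E] {X : Set E} {F : E → ℝ} {gF : E → E} {L μ : ℝ} {x₁ : E}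
  {H : E → ℝ} {a b c γ : ℝ} {y z z' m y' Δ x : E}

theorem accelerated_step_le (hX : Convex ℝ X) (hF : ConvexOn ℝ univ F)
    (hgF : ∀ x, HasGradientAt F (gF x) x)
    (hsmooth : ∀ x y, F x - F y - ⟪gF y, x - y⟫ ≤ L / 2 * ‖x - y‖ ^ 2)
    (hμ : 0 ≤ μ) (hH : ∀ x, H x = μ * ‖x - x₁‖ ^ 2)
    (ha : 0 ≤ a) (hb : 0 < b) (hc : c = a + b) (hγ : 0 ≤ γ)
    (hm : m = (a / c) • y + (b / c) • z) (hy' : y' = (a / c) • y + (b / c) • z')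
    (hprox : IsMinOn (fun w => b * (⟪gF m + Δ, w⟫ + H w) + γ * (μ * ‖w - z‖ ^ 2)) X z')
    (hz' : z' ∈ X) (hx : x ∈ X) :
    c * (F y' + H y' - (F x + H x)) + (γ + b) * (μ * ‖x - z'‖ ^ 2) ≤
      a * (F y + H y - (F x + H x)) + γ * (μ * ‖x - z‖ ^ 2) + b * ⟪Δ, x - z⟫ +
        b * ⟪Δ, z - z'⟫ + (L / 2 * (b ^ 2 / c) - γ * μ) * ‖z' - z‖ ^ 2 := by
  obtain rfl : H = fun x => μ * ‖x - x₁‖ ^ 2 := funext hH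
  subst hc
  have hHstrong {s : Set E} (hs : Convex ℝ s) :
      StrongConvexOn s (μ * 2) fun x => μ * ‖x - x₁‖ ^ 2 :=
    (strongConvexOn_norm_sub_sq hs x₁).const_mul hμ
  have hproxStrong : StrongConvexOn X (b * (0 + μ * 2) + γ * (μ * 2))
      fun w => b * (⟪gF m + Δ, w⟫ + μ * ‖w - x₁‖ ^ 2) + γ * (μ * ‖w - z‖ ^ 2) :=
    (((strongConvexOn_zero.2 ((innerₛₗ ℝ (gF m + Δ)).convexOn hX)).add
      (hHstrong hX)).const_mul hb.le).add
      (((strongConvexOn_norm_sub_sq hX z).const_mul hμ).const_mul hγ)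
  have hthree := hproxStrong.add_sq_le_of_isMinOn hprox hz' hx
  have hHconv : ConvexOn ℝ univ fun x => μ * ‖x - x₁‖ ^ 2 :=
    strongConvexOn_zero.1 ((hHstrong convex_univ).mono (by positivity))
  have hcouple := hF.linear_coupling_le hgF hsmooth ha hb rfl hm hy' x
  have hHavg := hHconv.mul_map_div_smul_add_le ha hb.le rfl (by linarith) y z'
  rw [← hy'] at hHavg
  simp only [inner_add_left, inner_sub_right] at hthree hcouple ⊢
  linarith

theorem accelerated_step_noisy_le (hX : Convex ℝ X) (hF : ConvexOn ℝ univ F)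
    (hgF : ∀ x, HasGradientAt F (gF x) x)
    (hsmooth : ∀ x y, F x - F y - ⟪gF y, x - y⟫ ≤ L / 2 * ‖x - y‖ ^ 2)
    (hμ : 0 < μ) (hH : ∀ x, H x = μ * ‖x - x₁‖ ^ 2)
    (ha : 0 ≤ a) (hb : 0 < b) (hc : c = a + b) (hγ : 0 < γ)
    (hm : m = (a / c) • y + (b / c) • z) (hy' : y' = (a / c) • y + (b / c) • z')
    (hprox : IsMinOn (fun w => b * (⟪gF m + Δ, w⟫ + H w) + γ * (μ * ‖w - z‖ ^ 2)) X z')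
    (hz' : z' ∈ X) (hx : x ∈ X) {ε : ℝ}
    (hε : L / 2 * (b ^ 2 / c) * ‖z' - z‖ ^ 2 ≤ ε + μ * γ / 4 * ‖z' - z‖ ^ 2) :
    c * (F y' + H y' - (F x + H x)) + (γ + b) * (μ * ‖x - z'‖ ^ 2) ≤
      a * (F y + H y - (F x + H x)) + γ * (μ * ‖x - z‖ ^ 2) +
        (b * ⟪Δ, x - z⟫ + ε + 2 * b ^ 2 / (μ * γ) * ‖Δ‖ ^ 2) := by
  have hstep := accelerated_step_le hX hF hgF hsmooth hμ.le hH ha hb hc hγ.le hm hy' hprox hz' hx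
  have hμγ : 0 < μ * γ := mul_pos hμ hγ
  have hyoung := mul_inner_le_sq_div_add b hμγ Δ (z - z')
  rw [norm_sub_rev] at hyoung
  have hnoise : b ^ 2 / (μ * γ) * ‖Δ‖ ^ 2 ≤ 2 * b ^ 2 / (μ * γ) * ‖Δ‖ ^ 2 := by
    gcongr; linarith [sq_nonneg b]
  have hbudget : 0 ≤ μ * γ * ‖z' - z‖ ^ 2 := by positivity
  linarith

end AcceleratedStep

end InnerProductSpace

theorem smoothness_term_le_ite_add {L μ : ℝ} (hμ : 0 < μ) {α γ A : ℕ → ℝ} {S : Set ℕ}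
    (hS : S = {t : ℕ | 1 ≤ t ∧ 2 * L / μ ≥ γ t * A t / (α t) ^ 2}) (hSbdd : BddAbove S)
    {t : ℕ} (ht : 1 ≤ t) (hα : 0 < α t) (hγ : 0 < γ t) (hA : 0 < A t) {N : ℝ} (hN : 0 ≤ N) :
    L / 2 * (α t ^ 2 / A t) * N ≤
      (if t ≤ sSup S then L / 2 * (α t ^ 2 / A t * N) else 0) + μ * γ t / 4 * N := by
  split_ifs with hearly
  · rw [mul_assoc]
    exact le_add_of_nonneg_right (by positivity)
  · have hlate : 2 * L / μ < γ t * A t / α t ^ 2 := by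
      have htS : t ∉ S := notMem_of_csSup_lt (not_le.1 hearly) hSbdd
      rw [hS] at htS
      exact not_le.1 fun h => htS ⟨ht, h⟩
    rw [div_lt_div_iff₀ hμ (by positivity)] at hlate
    have hcoef : L / 2 * (α t ^ 2 / A t) ≤ μ * γ t / 4 :=
      calc L / 2 * (α t ^ 2 / A t) = 2 * L * α t ^ 2 / (4 * A t) := by field_simp; ring
        _ ≤ γ t * A t * μ / (4 * A t) := by gcongr
        _ = μ * γ t / 4 := by field_simp
    rw [zero_add]
    exact mul_le_mul_of_nonneg_right hcoef hN

theorem sum_Icc_one_eq_add {M : Type*} [AddCommMonoid M] (f : ℕ → M) {t : ℕ} (ht : 1 ≤ t) :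
    ∑ s ∈ Finset.Icc 1 t, f s = ∑ s ∈ Finset.Icc 1 (t - 1), f s + f t := by
  obtain ⟨k, rfl⟩ : ∃ k, t = k + 1 := ⟨t - 1, by omega⟩
  exact Finset.sum_Icc_succ_top (by omega) f

theorem le_add_sum_Icc_of_le_add {u v r : ℕ → ℝ} (hu : ∀ t ≥ 1, u t ≤ v t + r t)
    (hv : ∀ t ≥ 1, v (t + 1) ≤ u t) {T : ℕ} (hT : 1 ≤ T) :
    u T ≤ v 1 + ∑ t ∈ Finset.Icc 1 T, r t := by
  induction T, hT using Nat.le_induction with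
  | base => simpa using hu 1 le_rfl
  | succ T hT ih =>
    rw [Finset.sum_Icc_succ_top (by omega)]
    linarith [hu (T + 1) (by omega), hv T hT]

theorem sum_Icc_ite_le_sum_Icc {f : ℕ → ℝ} {T₀ : ℕ} (hf : ∀ t ∈ Finset.Icc 1 T₀, 0 ≤ f t)
    (T : ℕ) : ∑ t ∈ Finset.Icc 1 T, (if t ≤ T₀ then f t else 0) ≤ ∑ t ∈ Finset.Icc 1 T₀, f t := by
  rw [← Finset.sum_filter]
  refine Finset.sum_le_sum_of_subset_of_nonneg (fun t ht => ?_) fun t ht _ => hf t ht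
  simp only [Finset.mem_filter, Finset.mem_Icc] at ht ⊢
  omega

theorem stmt18_general {n : ℕ}
    (X : Set (EuclideanSpace ℝ (Fin n))) (hXconv : Convex ℝ X)
    (F : EuclideanSpace ℝ (Fin n) → ℝ) (hFconv : ConvexOn ℝ Set.univ F)
    (gF : EuclideanSpace ℝ (Fin n) → EuclideanSpace ℝ (Fin n))
    (hgF : ∀ x, HasGradientAt F (gF x) x)
    (L : ℝ) (hL : 0 < L)
    (hsmooth : ∀ x y, F x - F y - ⟪gF y, x - y⟫ ≤ L / 2 * ‖x - y‖ ^ 2)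
    (μ : ℝ) (hμ : 0 < μ) (x₁ : EuclideanSpace ℝ (Fin n))
    (H Ψ : EuclideanSpace ℝ (Fin n) → ℝ)
    (hH : ∀ x, H x = μ * ‖x - x₁‖ ^ 2) (hΨ : ∀ x, Ψ x = F x + H x)
    (DH : EuclideanSpace ℝ (Fin n) → EuclideanSpace ℝ (Fin n) → ℝ)
    (hDH : ∀ a b, DH a b = μ * ‖a - b‖ ^ 2)
    (α γ : ℕ → ℝ) (hαpos : ∀ t ≥ 1, 0 < α t) (hγpos : ∀ t ≥ 1, 0 < γ t)
    (hstep : ∀ t ≥ 1, γ (t + 1) - γ t ≤ α t)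
    (A : ℕ → ℝ) (hA : ∀ t, A t = ∑ s ∈ Finset.Icc 1 t, α s)
    (Xs Xag Xmd : ℕ → EuclideanSpace ℝ (Fin n))
    (g Δ : ℕ → EuclideanSpace ℝ (Fin n))
    (hXs1 : Xs 1 = x₁)
    (hXmem : ∀ t ≥ 1, Xs t ∈ X)
    (hmd : ∀ t ≥ 1, Xmd t = (A (t - 1) / A t) • Xag t + (α t / A t) • Xs t)
    (hg : ∀ t ≥ 1, g t = gF (Xmd t) + Δ t)
    (hprox : ∀ t ≥ 1,
      IsMinOn (fun x => α t * (⟪g t, x⟫ + H x) + γ t * DH x (Xs t)) X (Xs (t + 1)))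
    (hagnext : ∀ t ≥ 1,
      Xag (t + 1) = (A (t - 1) / A t) • Xag t + (α t / A t) • Xs (t + 1))
    (S : Set ℕ) (hS : S = {t : ℕ | 1 ≤ t ∧ 2 * L / μ ≥ γ t * A t / (α t) ^ 2})
    (hSbdd : BddAbove S) (T₀ : ℕ) (hT₀ : T₀ = sSup S)
    (T : ℕ) (hT : 1 ≤ T) :
    ∀ x ∈ X,
      A T * (Ψ (Xag (T + 1)) - Ψ x) + γ T * DH x (Xs (T + 1)) ≤
        γ 1 * DH x x₁ + ∑ t ∈ Finset.Icc 1 T, α t * ⟪Δ t, x - Xs t⟫ +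
          L / 2 * ∑ t ∈ Finset.Icc 1 T₀, (α t) ^ 2 / A t * ‖Xs (t + 1) - Xs t‖ ^ 2 +
          ∑ t ∈ Finset.Icc 1 T, 2 * (α t) ^ 2 / (μ * γ t) * ‖Δ t‖ ^ 2 := by
  subst hT₀
  intro x hx
  have hA0 : A 0 = 0 := by simp [hA]
  have hAstep : ∀ t ≥ 1, A t = A (t - 1) + α t := fun t ht => by
    rw [hA, hA, sum_Icc_one_eq_add α ht]
  have hAnonneg : ∀ t, 0 ≤ A t := fun t =>
    hA t ▸ Finset.sum_nonneg fun s hs => (hαpos s (Finset.mem_Icc.1 hs).1).le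
  have hApos : ∀ t ≥ 1, 0 < A t := fun t ht =>
    hAstep t ht ▸ add_pos_of_nonneg_of_pos (hAnonneg _) (hαpos t ht)
  have hDHnonneg : ∀ a b, 0 ≤ DH a b := fun a b => by rw [hDH]; positivity
  have key : ∀ t ≥ 1, A t * (Ψ (Xag (t + 1)) - Ψ x) + (γ t + α t) * DH x (Xs (t + 1)) ≤
      (A (t - 1) * (Ψ (Xag t) - Ψ x) + γ t * DH x (Xs t)) +
        (α t * ⟪Δ t, x - Xs t⟫ +
          (if t ≤ sSup S then L / 2 * (α t ^ 2 / A t * ‖Xs (t + 1) - Xs t‖ ^ 2) else 0) +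
          2 * (α t) ^ 2 / (μ * γ t) * ‖Δ t‖ ^ 2) := fun t ht => by
    simpa only [hΨ, hDH] using accelerated_step_noisy_le hXconv hFconv hgF hsmooth hμ hH
      (hAnonneg (t - 1)) (hαpos t ht) (hAstep t ht) (hγpos t ht) (hmd t ht) (hagnext t ht)
      (by simpa only [hg t ht, hDH] using hprox t ht) (hXmem (t + 1) (by omega)) hx
      (smoothness_term_le_ite_add hμ hS hSbdd ht (hαpos t ht) (hγpos t ht) (hApos t ht)
        (sq_nonneg _))
  have hpotential : ∀ t ≥ 1,
      A (t + 1 - 1) * (Ψ (Xag (t + 1)) - Ψ x) + γ (t + 1) * DH x (Xs (t + 1)) ≤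
        A t * (Ψ (Xag (t + 1)) - Ψ x) + (γ t + α t) * DH x (Xs (t + 1)) := fun t ht => by
    rw [Nat.add_sub_cancel]
    gcongr
    · exact hDHnonneg _ _
    · linarith [hstep t ht]
  have htele := le_add_sum_Icc_of_le_add key hpotential hT
  simp only [Nat.sub_self, hA0, zero_mul, zero_add, hXs1, Finset.sum_add_distrib] at htele
  have hearly := sum_Icc_ite_le_sum_Icc (T₀ := sSup S)
    (f := fun t => L / 2 * (α t ^ 2 / A t * ‖Xs (t + 1) - Xs t‖ ^ 2))
    (fun t ht => by have := hApos t (Finset.mem_Icc.1 ht).1; positivity) T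
  rw [← Finset.mul_sum] at hearly
  have hlast := mul_le_mul_of_nonneg_right (le_add_of_nonneg_right (hαpos T hT).le :
    γ T ≤ γ T + α T) (hDHnonneg x (Xs (T + 1)))
  linarith

theorem stmt18 {n : ℕ}
    (X : Set (EuclideanSpace ℝ (Fin n))) (hXconv : Convex ℝ X)
    (F : EuclideanSpace ℝ (Fin n) → ℝ) (hFconv : ConvexOn ℝ Set.univ F)
    (gF : EuclideanSpace ℝ (Fin n) → EuclideanSpace ℝ (Fin n))
    (hgF : ∀ x, HasGradientAt F (gF x) x)
    (L : ℝ) (hL : 0 < L)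
    (hsmooth : ∀ x y, F x - F y - ⟪gF y, x - y⟫ ≤ L / 2 * ‖x - y‖ ^ 2)
    (μ : ℝ) (hμ : 0 < μ) (x₁ : EuclideanSpace ℝ (Fin n)) (hx₁ : x₁ ∈ X)
    (H Ψ : EuclideanSpace ℝ (Fin n) → ℝ)
    (hH : ∀ x, H x = μ * ‖x - x₁‖ ^ 2) (hΨ : ∀ x, Ψ x = F x + H x)
    (DH : EuclideanSpace ℝ (Fin n) → EuclideanSpace ℝ (Fin n) → ℝ)
    (hDH : ∀ a b, DH a b = μ * ‖a - b‖ ^ 2)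
    (α γ : ℕ → ℝ) (hαpos : ∀ t ≥ 1, 0 < α t) (hγpos : ∀ t ≥ 1, 0 < γ t)
    (hstep : ∀ t ≥ 1, γ (t + 1) - γ t ≤ α t) (hmono : ∀ t ≥ 1, α t ≤ α (t + 1))
    (A : ℕ → ℝ) (hA : ∀ t, A t = ∑ s ∈ Finset.Icc 1 t, α s)
    (Xs Xag Xmd : ℕ → EuclideanSpace ℝ (Fin n))
    (g Δ : ℕ → EuclideanSpace ℝ (Fin n))
    (hXs1 : Xs 1 = x₁) (hXag1 : Xag 1 = x₁)
    (hXmem : ∀ t ≥ 1, Xs t ∈ X)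
    (hmd : ∀ t ≥ 1, Xmd t = (A (t - 1) / A t) • Xag t + (α t / A t) • Xs t)
    (hg : ∀ t ≥ 1, g t = gF (Xmd t) + Δ t)
    (hprox : ∀ t ≥ 1,
      IsMinOn (fun x => α t * (⟪g t, x⟫ + H x) + γ t * DH x (Xs t)) X (Xs (t + 1)))
    (hagnext : ∀ t ≥ 1,
      Xag (t + 1) = (A (t - 1) / A t) • Xag t + (α t / A t) • Xs (t + 1))
    (S : Set ℕ) (hS : S = {t : ℕ | 1 ≤ t ∧ 2 * L / μ ≥ γ t * A t / (α t) ^ 2})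
    (hSbdd : BddAbove S) (T₀ : ℕ) (hT₀ : T₀ = sSup S)
    (T : ℕ) (hT : 1 ≤ T) :
    ∀ x ∈ X,
      A T * (Ψ (Xag (T + 1)) - Ψ x) + γ T * DH x (Xs (T + 1)) ≤
        γ 1 * DH x x₁ + ∑ t ∈ Finset.Icc 1 T, α t * ⟪Δ t, x - Xs t⟫ +
          L / 2 * ∑ t ∈ Finset.Icc 1 T₀, (α t) ^ 2 / A t * ‖Xs (t + 1) - Xs t‖ ^ 2 +
          ∑ t ∈ Finset.Icc 1 T, 2 * (α t) ^ 2 / (μ * γ t) * ‖Δ t‖ ^ 2 :=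
  stmt18_general X hXconv F hFconv gF hgF L hL hsmooth μ hμ x₁ H Ψ hH hΨ DH hDH α γ hαpos hγpos
    hstep A hA Xs Xag Xmd g Δ hXs1 hXmem hmd hg hprox hagnext S hS hSbdd T₀ hT₀ T hT
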